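/- arXiv:1805.11405 — 3 statements merged into one kernel-verified Lean document; each statement's English description precedes it below -/
import Mathlib

section
/- For every β > π, d ≥ 7, and 0 < τ < 1/2, there exists a polynomial q of degree at most d such that sup_{x ∈ [−1,1]} |q(x) − (1/β)log(1 + e^{βx})| ≤ (12β/π)·e^{−πd/(4β)}. -/
/-!
Since `(1/β) log (1 + e^{βx}) = x/2 + f x` with `f x = log (2 cosh (βx/2)) / β`, it suffices to
approximate the even function `f`. The map `θ ↦ f (cos θ)` extends holomorphically to the strip
`|Im θ| ≤ π/(4β)`, where it is bounded by `3/2`; moving the Fourier integral to an edge of the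
strip gives `|cₙ| ≤ (3/2) r^{|n|}` with `r = e^{-π/(4β)}`. As `f (cos θ) = ∑ Re cₙ cos nθ` and
`cos nθ = Tₙ (cos θ)`, the Chebyshev truncation at degree `d` errs by at most the geometric tail
`3 r^{d+1} / (1 - r)`, and `r / (1 - r) ≤ 4β/π`.
-/

open Complex Polynomial
open scoped Real Interval

theorem hasSum_pow_natAbs_tail {r : ℝ} (hr0 : 0 ≤ r) (hr1 : r < 1) (d : ℕ) :
    HasSum (fun n : ℤ => if n.natAbs ≤ d then 0 else r ^ n.natAbs)
      (2 * r ^ (d + 1) / (1 - r)) := by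
  have half : HasSum (fun n : ℕ => if n + 1 ≤ d then 0 else r ^ (n + 1))
      (r ^ (d + 1) / (1 - r)) := by
    rw [← hasSum_nat_add_iff' d, Finset.sum_eq_zero fun i hi => if_pos (by simpa using hi),
      sub_zero]
    have hshift : (fun n => if n + d + 1 ≤ d then 0 else r ^ (n + d + 1)) =
        fun n => r ^ (d + 1) * r ^ n := by
      ext n
      rw [if_neg (by omega)]
      ring
    rw [hshift, div_eq_mul_inv]
    exact (hasSum_geometric_of_lt_one hr0 hr1).mul_left _
  have hpos : ∀ n : ℕ, ((n : ℤ) + 1).natAbs = n + 1 := by omega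
  have hneg : ∀ n : ℕ, (-((n : ℤ) + 1)).natAbs = n + 1 := by omega
  convert HasSum.of_add_one_of_neg_add_one
    (f := fun n : ℤ => if n.natAbs ≤ d then 0 else r ^ n.natAbs)
    (by simpa only [hpos] using half) (by simpa only [hneg] using half) using 1
  simp only [Int.natAbs_zero, zero_le, if_true]
  ring

local instance : Fact (0 < 2 * π) := ⟨Real.two_pi_pos⟩

noncomputable def cosPullback (f : ℝ → ℝ) : AddCircle (2 * π) → ℂ :=
  (Real.cos_periodic.comp fun y => (f y : ℂ)).lift

theorem cosPullback_coe (f : ℝ → ℝ) (θ : ℝ) : cosPullback f θ = f (Real.cos θ) := rfl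

theorem continuous_cosPullback {f : ℝ → ℝ} (hf : Continuous f) : Continuous (cosPullback f) :=
  (continuous_ofReal.comp (hf.comp Real.continuous_cos)).quotient_liftOn' _

theorem fourier_coe_two_pi (n : ℤ) (θ : ℝ) :
    fourier n (θ : AddCircle (2 * π)) = exp ((n * θ : ℝ) * I) := by
  rw [fourier_coe_apply]
  congr 1
  push_cast
  field_simp

theorem hasSum_re_mul_cos_of_summable_fourierCoeff {f : ℝ → ℝ} (hf : Continuous f)
    (hsum : Summable (fourierCoeff (cosPullback f))) (θ : ℝ) :
    HasSum (fun n : ℤ => (fourierCoeff (cosPullback f) n).re * Real.cos (n * θ))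
      (f (Real.cos θ)) := by
  set c := fourierCoeff (cosPullback f)
  have hre (θ : ℝ) : HasSum (fun n : ℤ => (c n * exp ((n * θ : ℝ) * I)).re)
      (f (Real.cos θ)) := by
    have h := reCLM.hasSum <| has_pointwise_sum_fourier_series_of_summable
      (f := ⟨cosPullback f, continuous_cosPullback hf⟩) hsum θ
    simpa only [reCLM_apply, ContinuousMap.coe_mk, cosPullback_coe, ofReal_re,
      fourier_coe_two_pi, smul_eq_mul] using h
  -- averaging the series at `θ` and `-θ` cancels the terms `(c n).im * sin (n * θ)`
  have hsym := ((hre θ).add (hre (-θ))).div_const 2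
  rw [Real.cos_neg, add_self_div_two] at hsym
  refine hsym.congr_fun fun n => ?_
  simp only [mul_re, exp_ofReal_mul_I_re, exp_ofReal_mul_I_im, mul_neg,
    Real.cos_neg, Real.sin_neg]
  ring

theorem exists_natDegree_le_abs_eval_sub_le_of_fourierCoeff_le {f : ℝ → ℝ} (hf : Continuous f)
    {M r : ℝ} (hr0 : 0 ≤ r) (hr1 : r < 1)
    (hc : ∀ n : ℤ, ‖fourierCoeff (cosPullback f) n‖ ≤ M * r ^ n.natAbs) (d : ℕ) :
    ∃ q : ℝ[X], q.natDegree ≤ d ∧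
      ∀ x ∈ Set.Icc (-1 : ℝ) 1, |q.eval x - f x| ≤ M * (2 * r ^ (d + 1) / (1 - r)) := by
  set c := fourierCoeff (cosPullback f) with hc_def
  set s := Finset.Icc (-(d : ℤ)) d
  have hs (n : ℤ) : n ∈ s ↔ n.natAbs ≤ d := by
    rw [Finset.mem_Icc]
    omega
  have hbound := (hasSum_pow_natAbs_tail hr0 hr1 d).mul_left M
  have hsum : Summable c := by
    refine .of_norm_bounded (Summable.mul_left M ?_) hc
    apply Summable.of_nat_of_neg <;>
      simpa only [Int.natAbs_neg, Int.natAbs_natCast] using summable_geometric_of_lt_one hr0 hr1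
  refine ⟨∑ n ∈ s, C (c n).re * Chebyshev.T ℝ n, ?_, fun x hx => ?_⟩
  · refine natDegree_sum_le_of_forall_le _ _ fun n hn => ?_
    exact (natDegree_C_mul_le _ _).trans ((Chebyshev.natDegree_T ℝ n).trans_le ((hs n).1 hn))
  · obtain ⟨θ, rfl⟩ : ∃ θ, Real.cos θ = x := ⟨Real.arccos x, Real.cos_arccos hx.1 hx.2⟩
    have hfin : HasSum (fun n => if n ∈ s then (c n).re * Real.cos (n * θ) else 0)
        (∑ n ∈ s, (c n).re * Real.cos (n * θ)) := by
      rw [← Finset.sum_congr rfl fun n hn => if_pos hn]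
      exact hasSum_sum_of_ne_finset_zero fun n hn => if_neg hn
    have htail := hfin.sub (hasSum_re_mul_cos_of_summable_fourierCoeff hf hsum θ)
    rw [← hc_def] at htail
    simp only [eval_finsetSum, eval_mul, eval_C, Chebyshev.T_real_cos]
    refine htail.norm_le_of_bounded hbound fun n => ?_
    by_cases hn : n ∈ s
    · simp [hn, (hs n).1 hn]
    · rw [if_neg hn, if_neg (mt (hs n).2 hn), zero_sub, norm_neg, norm_mul, Real.norm_eq_abs]
      calc |(c n).re| * ‖Real.cos (n * θ)‖ ≤ ‖c n‖ * 1 :=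
            mul_le_mul (abs_re_le_norm _) (by simpa using Real.abs_cos_le_one _)
              (norm_nonneg _) (norm_nonneg _)
        _ ≤ M * r ^ n.natAbs := by rw [mul_one]; exact hc n

theorem intervalIntegral_eq_integral_add_mul_I_of_periodic {E : Type*} [NormedAddCommGroup E]
    [NormedSpace ℂ E] [CompleteSpace E] {F : ℂ → E} {T h : ℝ} (hper : ∀ z, F (z + T) = F z)
    (hF : DifferentiableOn ℂ F ([[0, T]] ×ℂ [[0, h]])) :
    ∫ x : ℝ in 0..T, F x = ∫ x : ℝ in 0..T, F (x + h * I) := by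
  have hrect := integral_boundary_rect_eq_zero_of_differentiableOn F 0 (T + h * I)
    (by simpa using hF)
  have hside (y : ℝ) : F ((T + h * I).re + y * I) = F ((0 : ℂ).re + y * I) := by
    simpa [add_comm] using hper (y * I)
  simp only [hside] at hrect
  simpa [sub_eq_zero] using hrect

theorem norm_fourierCoeff_le_of_differentiableOn_strip {f : AddCircle (2 * π) → ℂ} {F : ℂ → ℂ}
    {η M : ℝ} (hη : 0 ≤ η) (hfF : ∀ x : ℝ, f x = F x) (hper : ∀ z, F (z + 2 * π) = F z)
    (hF : DifferentiableOn ℂ F {z | |z.im| ≤ η}) (hM : ∀ z, |z.im| ≤ η → ‖F z‖ ≤ M) (n : ℤ) :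
    ‖fourierCoeff f n‖ ≤ M * Real.exp (-η) ^ n.natAbs := by
  set G : ℂ → ℂ := fun z => exp (-(n * z * I)) * F z
  have hGper (z : ℂ) : G (z + (2 * π : ℝ)) = G z := by
    have hexp : -(n * (z + (2 * π : ℝ)) * I) = -(n * z * I) + (-n : ℤ) * (2 * π * I) := by
      push_cast
      ring
    simp only [G, hexp, exp_add, exp_int_mul_two_pi_mul_I, mul_one]
    push_cast
    rw [hper]
  have hcoeff : fourierCoeff f n = (1 / (2 * π)) • ∫ x : ℝ in 0..2 * π, G x := by
    rw [fourierCoeff_eq_intervalIntegral f n 0, zero_add]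
    congr 1
    refine intervalIntegral.integral_congr fun x _ => ?_
    simp only [G, fourier_coe_two_pi, hfF, smul_eq_mul]
    push_cast
    ring_nf
  have hshift (h : ℝ) (hh : |h| ≤ η) : ‖fourierCoeff f n‖ ≤ M * Real.exp (n * h) := by
    have hG : DifferentiableOn ℂ G ([[0, 2 * π]] ×ℂ [[0, h]]) := by
      refine DifferentiableOn.mul (by fun_prop) (hF.mono fun z hz => ?_)
      simpa using (Set.abs_sub_left_of_mem_uIcc hz.2).trans (by simpa using hh)
    rw [hcoeff, intervalIntegral_eq_integral_add_mul_I_of_periodic hGper hG, norm_smul]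
    have hbound : ∀ x ∈ Ι 0 (2 * π), ‖G (x + h * I)‖ ≤ M * Real.exp (n * h) := fun x _ => by
      have him : |((x : ℂ) + h * I).im| ≤ η := by simpa using hh
      rw [norm_mul, norm_exp, mul_comm M]
      refine mul_le_mul (le_of_eq ?_) (hM _ him) (norm_nonneg _) (Real.exp_pos _).le
      congr 1
      simp
    calc ‖(1 / (2 * π) : ℝ)‖ * ‖∫ x : ℝ in 0..2 * π, G (x + h * I)‖
        ≤ 1 / (2 * π) * (M * Real.exp (n * h) * |2 * π - 0|) := by
          rw [Real.norm_of_nonneg (by positivity)]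
          gcongr
          exact intervalIntegral.norm_integral_le_of_norm_le_const hbound
      _ = M * Real.exp (n * h) := by
          rw [sub_zero, abs_of_pos Real.two_pi_pos]
          field_simp
  -- shift down for `n ≥ 0` and up for `n ≤ 0`, so that `|exp (-(n * z * I))| = exp (-|n| * η)`
  rw [← Real.exp_nat_mul, Nat.cast_natAbs, Int.cast_abs]
  rcases le_total 0 n with hn | hn
  · convert hshift (-η) (by rw [abs_neg, abs_of_nonneg hη]) using 3
    rw [abs_of_nonneg (by exact_mod_cast hn)]
  · convert hshift η (abs_of_nonneg hη).le using 3
    rw [abs_of_nonpos (by exact_mod_cast hn)]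
    ring

theorem sinh_le_three_halves_mul {t : ℝ} (h0 : 0 ≤ t) (h1 : t ≤ 1 / 2) :
    Real.sinh t ≤ 3 / 2 * t := by
  have hlow := Real.add_one_le_exp (-t)
  have hup : (1 - t) * Real.exp t ≤ 1 := by
    nlinarith [Real.exp_pos t, Real.exp_neg t, mul_inv_cancel₀ (Real.exp_pos t).ne']
  rw [Real.sinh_eq]
  nlinarith [Real.exp_pos t]

theorem cosh_le_seven_sixths {t : ℝ} (h : |t| ≤ 1 / 4) : Real.cosh t ≤ 7 / 6 := by
  rw [← Real.cosh_abs, Real.cosh_eq]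
  have hlow := Real.add_one_le_exp (-|t|)
  have hup : (1 - |t|) * Real.exp |t| ≤ 1 := by
    nlinarith [Real.exp_pos |t|, Real.exp_neg |t|, mul_inv_cancel₀ (Real.exp_pos |t|).ne']
  have hneg : Real.exp (-|t|) ≤ 1 := Real.exp_le_one_iff.mpr (by simp)
  nlinarith [Real.exp_pos |t|, abs_nonneg t]


theorem re_cos (z : ℂ) : (cos z).re = Real.cos z.re * Real.cosh z.im := by
  simpa [cos_ofReal_re] using congrArg re (cos_add_mul_I z.re z.im)

theorem im_cos (z : ℂ) : (cos z).im = -(Real.sin z.re * Real.sinh z.im) := by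
  simpa [sin_ofReal_re, sinh_ofReal_re] using congrArg im (cos_add_mul_I z.re z.im)

theorem re_cosh (z : ℂ) : (cosh z).re = Real.cosh z.re * Real.cos z.im := by
  conv_lhs => rw [← re_add_im z, cosh_add, cosh_mul_I, sinh_mul_I]
  simp [cos_ofReal_re, cosh_ofReal_re, sin_ofReal_re, sinh_ofReal_re]

theorem norm_cosh_le_exp_abs_re (z : ℂ) : ‖cosh z‖ ≤ Real.exp |z.re| := by
  have h1 : ‖exp z‖ ≤ Real.exp |z.re| := by
    rw [norm_exp]; exact Real.exp_le_exp.mpr (le_abs_self _)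
  have h2 : ‖exp (-z)‖ ≤ Real.exp |z.re| := by
    rw [norm_exp, neg_re]; exact Real.exp_le_exp.mpr (neg_le_abs _)
  rw [cosh, norm_div, Complex.norm_two]
  linarith [norm_add_le (exp z) (exp (-z))]

theorem one_le_re_two_mul_cosh {w : ℂ} (hw : |w.im| ≤ 1) : 1 ≤ (2 * cosh w).re := by
  have hcos : 1 / 2 ≤ Real.cos w.im := by
    nlinarith [Real.one_sub_sq_div_two_le_cos (x := w.im), sq_abs w.im, abs_nonneg w.im]
  have hcosh := Real.one_le_cosh w.re
  rw [show (2 : ℂ) = (2 : ℝ) by norm_num, re_ofReal_mul, re_cosh]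
  nlinarith

theorem norm_log_two_mul_cosh_le {w : ℂ} (hw : |w.im| ≤ 1) :
    ‖log (2 * cosh w)‖ ≤ Real.log 2 + |w.re| + π / 2 := by
  have hre := one_le_re_two_mul_cosh hw
  have hnorm : 1 ≤ ‖2 * cosh w‖ := hre.trans (re_le_norm _)
  have hlog_re : |(log (2 * cosh w)).re| ≤ Real.log 2 + |w.re| := by
    rw [log_re, abs_of_nonneg (Real.log_nonneg hnorm), ← Real.log_exp |w.re|,
      ← Real.log_mul two_ne_zero (Real.exp_pos _).ne']
    refine Real.log_le_log (by linarith) ?_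
    rw [norm_mul, Complex.norm_two]
    gcongr
    exact norm_cosh_le_exp_abs_re w
  have hlog_im : |(log (2 * cosh w)).im| ≤ π / 2 := by
    rw [log_im]
    exact abs_arg_le_pi_div_two_iff.mpr (by linarith)
  linarith [norm_le_abs_re_add_abs_im (log (2 * cosh w))]

noncomputable def softplus (β x : ℝ) : ℝ := 1 / β * Real.log (1 + Real.exp (β * x))

theorem softplus_eq_half_add {β : ℝ} (hβ : β ≠ 0) (x : ℝ) :
    softplus β x = x / 2 + Real.log (2 * Real.cosh (β * x / 2)) / β := by
  have hfactor : 1 + Real.exp (β * x) = Real.exp (β * x / 2) * (2 * Real.cosh (β * x / 2)) := by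
    rw [Real.cosh_eq, mul_div_cancel₀ _ two_ne_zero, mul_add, ← Real.exp_add, ← Real.exp_add]
    ring_nf
    rw [Real.exp_zero, add_comm]
  rw [softplus, hfactor, Real.log_mul (Real.exp_pos _).ne' (by positivity), Real.log_exp]
  field_simp

noncomputable def logTwoCoshCos (β : ℝ) (z : ℂ) : ℂ := log (2 * cosh (β * cos z / 2)) / β

theorem logTwoCoshCos_ofReal {β : ℝ} (hβ : β ≠ 0) (θ : ℝ) :
    logTwoCoshCos β θ = (softplus β (Real.cos θ) - Real.cos θ / 2 : ℝ) := by
  have hpos : 0 ≤ 2 * Real.cosh (β * Real.cos θ / 2) := by positivity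
  rw [softplus_eq_half_add hβ, add_sub_cancel_left, logTwoCoshCos, ← ofReal_cos, ofReal_div,
    ofReal_log hpos]
  push_cast
  rfl

theorem logTwoCoshCos_add_two_pi (β : ℝ) (z : ℂ) :
    logTwoCoshCos β (z + 2 * π) = logTwoCoshCos β z := by
  rw [logTwoCoshCos, logTwoCoshCos, cos_add_two_pi]

section strip

variable {β : ℝ} (hβ : π < β) {z : ℂ} (hz : |z.im| ≤ π / (4 * β))
include hβ hz

theorem abs_im_le_quarter : |z.im| ≤ 1 / 4 :=
  hz.trans <| by rw [div_le_iff₀ (by linarith [Real.pi_pos])]; linarith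

theorem abs_im_mul_cos_div_two_le : |(β * cos z / 2).im| ≤ 1 := by
  have hβ0 : 0 < β := Real.pi_pos.trans hβ
  have hsinh : Real.sinh |z.im| ≤ 3 / 2 * (π / (4 * β)) :=
    (sinh_le_three_halves_mul (abs_nonneg _) (by linarith [abs_im_le_quarter hβ hz])).trans
      (by gcongr)
  rw [show (β : ℂ) * cos z / 2 = (β / 2 : ℝ) * cos z by push_cast; ring, im_ofReal_mul, im_cos,
    abs_mul, abs_neg, abs_mul, abs_of_pos (by positivity : 0 < β / 2), Real.abs_sinh]
  calc β / 2 * (|Real.sin z.re| * Real.sinh |z.im|) ≤ β / 2 * (3 / 2 * (π / (4 * β))) := by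
        refine mul_le_mul_of_nonneg_left ((mul_le_of_le_one_left ?_ ?_).trans hsinh) ?_
        · exact Real.sinh_nonneg_iff.mpr (abs_nonneg _)
        · exact Real.abs_sin_le_one _
        · positivity
    _ = 3 * π / 16 := by field_simp; ring
    _ ≤ 1 := by linarith [Real.pi_lt_d2]

theorem abs_re_mul_cos_div_two_le : |(β * cos z / 2).re| ≤ 7 / 12 * β := by
  have hβ0 : 0 < β := Real.pi_pos.trans hβ
  rw [show (β : ℂ) * cos z / 2 = (β / 2 : ℝ) * cos z by push_cast; ring, re_ofReal_mul, re_cos,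
    abs_mul, abs_mul, abs_of_pos (by positivity : 0 < β / 2),
    abs_of_pos (Real.cosh_pos _)]
  calc β / 2 * (|Real.cos z.re| * Real.cosh z.im) ≤ β / 2 * (1 * (7 / 6)) := by
        gcongr
        · exact Real.abs_cos_le_one _
        · exact cosh_le_seven_sixths (abs_im_le_quarter hβ hz)
    _ = 7 / 12 * β := by ring

theorem differentiableAt_logTwoCoshCos : DifferentiableAt ℂ (logTwoCoshCos β) z := by
  have hslit : 2 * cosh (β * cos z / 2) ∈ slitPlane :=
    mem_slitPlane_iff.mpr <| .inl <|
      one_pos.trans_le (one_le_re_two_mul_cosh (abs_im_mul_cos_div_two_le hβ hz))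
  unfold logTwoCoshCos
  fun_prop (disch := exact hslit)

theorem norm_logTwoCoshCos_le : ‖logTwoCoshCos β z‖ ≤ 3 / 2 := by
  have hβ0 : 0 < β := Real.pi_pos.trans hβ
  have hlog := norm_log_two_mul_cosh_le (abs_im_mul_cos_div_two_le hβ hz)
  have hre := abs_re_mul_cos_div_two_le hβ hz
  rw [logTwoCoshCos, norm_div, norm_real, Real.norm_of_nonneg hβ0.le, div_le_iff₀ hβ0]
  linarith [Real.log_two_lt_d9, Real.pi_gt_d2]

end strip

theorem continuous_softplus (β : ℝ) : Continuous (softplus β) := by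
  unfold softplus
  fun_prop (disch := intro x; positivity)

theorem norm_fourierCoeff_softplus_sub_half_le {β : ℝ} (hβ : π < β) (n : ℤ) :
    ‖fourierCoeff (cosPullback fun x => softplus β x - x / 2) n‖ ≤
      3 / 2 * Real.exp (-(π / (4 * β))) ^ n.natAbs := by
  have hβ0 : 0 < β := Real.pi_pos.trans hβ
  refine norm_fourierCoeff_le_of_differentiableOn_strip (by positivity)
    (fun θ => (logTwoCoshCos_ofReal hβ0.ne' θ).symm) (logTwoCoshCos_add_two_pi β)
    (fun z hz => (differentiableAt_logTwoCoshCos hβ hz).differentiableWithinAt)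
    (fun z hz => norm_logTwoCoshCos_le hβ hz) n

theorem exp_neg_div_one_sub_exp_neg_le {η : ℝ} (hη : 0 < η) :
    Real.exp (-η) / (1 - Real.exp (-η)) ≤ 1 / η := by
  have hlt : Real.exp (-η) < 1 := Real.exp_lt_one_iff.mpr (neg_lt_zero.mpr hη)
  rw [div_le_div_iff₀ (sub_pos.mpr hlt) hη, Real.exp_neg]
  have hexp := Real.add_one_le_exp η
  have hpos := Real.exp_pos η
  field_simp
  linarith

theorem softplus_poly_approx_general (β : ℝ) (hβ : Real.pi < β) (d : ℕ) (hd : 7 ≤ d) :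
    ∃ q : Polynomial ℝ, q.degree ≤ d ∧
      ∀ x ∈ Set.Icc (-1 : ℝ) 1,
        |q.eval x - (1 / β) * Real.log (1 + Real.exp (β * x))| ≤
          (12 * β / Real.pi) * Real.exp (-(Real.pi * d) / (4 * β)) := by
  have hβ0 : 0 < β := Real.pi_pos.trans hβ
  have hη : 0 < π / (4 * β) := by positivity
  set r := Real.exp (-(π / (4 * β)))
  have hr1 : r < 1 := Real.exp_lt_one_iff.mpr (neg_lt_zero.mpr hη)
  obtain ⟨q, hqdeg, hq⟩ := exists_natDegree_le_abs_eval_sub_le_of_fourierCoeff_le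
    ((continuous_softplus β).sub (continuous_id.div_const 2)) (Real.exp_pos _).le hr1
    (norm_fourierCoeff_softplus_sub_half_le hβ) d
  refine ⟨q + C (1 / 2) * X, degree_le_of_natDegree_le ?_, fun x hx => ?_⟩
  · refine (natDegree_add_le _ _).trans (max_le hqdeg ?_)
    rw [natDegree_C_mul_X _ (by norm_num)]
    omega
  calc |(q + C (1 / 2) * X).eval x - 1 / β * Real.log (1 + Real.exp (β * x))|
      = |q.eval x - (softplus β x - x / 2)| := by
        rw [softplus]
        simp only [eval_add, eval_mul, eval_C, eval_X]
        ring_nf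
    _ ≤ 3 / 2 * (2 * r ^ (d + 1) / (1 - r)) := hq x hx
    _ = 3 * r ^ d * (r / (1 - r)) := by ring
    _ ≤ 3 * r ^ d * (1 / (π / (4 * β))) :=
        mul_le_mul_of_nonneg_left (exp_neg_div_one_sub_exp_neg_le hη) (by positivity)
    _ = 12 * β / π * Real.exp (-(π * d) / (4 * β)) := by
        rw [← Real.exp_nat_mul]
        field_simp
        ring_nf

/-- For every `β > π`, `d ≥ 7`, and `0 < τ < 1/2`, there exists a polynomial `q` of
degree at most `d` with
`sup_{x ∈ [−1,1]} |q(x) − (1/β) log(1 + e^{βx})| ≤ (12β/π) e^{−πd/(4β)}`. -/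
theorem softplus_poly_approx (β : ℝ) (hβ : Real.pi < β) (d : ℕ) (hd : 7 ≤ d)
    (τ : ℝ) (hτ0 : 0 < τ) (hτ : τ < 1 / 2) :
    ∃ q : Polynomial ℝ, q.degree ≤ d ∧
      ∀ x ∈ Set.Icc (-1 : ℝ) 1,
        |q.eval x - (1 / β) * Real.log (1 + Real.exp (β * x))| ≤
          (12 * β / Real.pi) * Real.exp (-(Real.pi * d) / (4 * β)) :=
  softplus_poly_approx_general β hβ d hd
end

section
/- (Lower bound for linear predictors) In the model X = AZ + ξ with A orthogonal n×n, w ∈ {±1}^n, Z with i.i.d. coordinates equal to N(0,γ²) with probability k/n and 0 otherwise, ξ ~ N(0,σ²I), and Y = ⟨w,Z⟩: for every w̃ ∈ ℝ^n, E[(⟨w̃, X⟩ − Y)²] ≥ γ²k·σ²/(γ²(k/n) + σ²). -/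
open Matrix MeasureTheory ProbabilityTheory NNReal

/-!
The residual `⟨wt, X⟩ - Y = ⟨Aᵀ wt - w, Z⟩ + ⟨wt, ξ⟩` is a linear form in the independent
coordinates of `(Z, ξ)`, so its second moment is at least its variance
`s ‖Aᵀ wt - w‖² + σ² ‖wt‖²`, where `s = γ² k / n` is the variance of a coordinate of `Z`.
Orthogonality of `A` gives `‖wt‖² = ‖Aᵀ wt‖²`, and coordinatewise
`s (u - w)² + σ² u² ≥ s σ² w² / (s + σ²)` with `w_j² = 1`.
-/

noncomputable def sparseGaussianReal (p v : ℝ≥0) : Measure ℝ :=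
  (1 - p) • Measure.dirac 0 + p • gaussianReal 0 v

section SparseGaussian

variable {p : ℝ≥0} (v : ℝ≥0)

lemma isProbabilityMeasure_sparseGaussianReal (hp : p ≤ 1) :
    IsProbabilityMeasure (sparseGaussianReal p v) := by
  constructor
  simp [sparseGaussianReal, tsub_add_cancel_of_le (ENNReal.coe_le_one_iff.2 hp)]

lemma integrable_sparseGaussianReal {f : ℝ → ℝ} (hf : Integrable f (gaussianReal 0 v)) :
    Integrable f (sparseGaussianReal p v) :=
  (integrable_dirac (by simp)).smul_measure_nnreal.add_measure hf.smul_measure_nnreal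

lemma integral_sparseGaussianReal {f : ℝ → ℝ} (hf : Integrable f (gaussianReal 0 v)) :
    ∫ x, f x ∂sparseGaussianReal p v =
      (1 - p : ℝ≥0) * f 0 + p * ∫ x, f x ∂gaussianReal 0 v := by
  rw [sparseGaussianReal, integral_add_measure (integrable_dirac (by simp)).smul_measure_nnreal
    hf.smul_measure_nnreal, integral_smul_nnreal_measure, integral_smul_nnreal_measure,
    integral_dirac]
  rfl

lemma memLp_id_sparseGaussianReal : MemLp id 2 (sparseGaussianReal p v) :=
  (memLp_two_iff_integrable_sq aestronglyMeasurable_id).2 <|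
    integrable_sparseGaussianReal v ((memLp_id_gaussianReal 2).integrable_sq)

lemma variance_id_sparseGaussianReal : Var[id; sparseGaussianReal p v] = p * v := by
  have hmean : ∫ x, x ∂sparseGaussianReal p v = 0 := by
    rw [integral_sparseGaussianReal v (f := fun x ↦ x)
      ((memLp_id_gaussianReal 1).integrable le_rfl)]
    simp [integral_id_gaussianReal]
  have hsq : ∫ x, id x ^ 2 ∂gaussianReal 0 v = v :=
    (variance_of_integral_eq_zero aemeasurable_id integral_id_gaussianReal).symm.trans
      variance_id_gaussianReal
  rw [variance_of_integral_eq_zero aemeasurable_id hmean,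
    integral_sparseGaussianReal v (f := fun x ↦ id x ^ 2) (memLp_id_gaussianReal 2).integrable_sq,
    hsq]
  simp

end SparseGaussian

section Pi

variable {ι : Type*} [Fintype ι] {μ : Measure ℝ} [IsProbabilityMeasure μ]

lemma memLp_dotProduct_pi (hμ : MemLp id 2 μ) (c : ι → ℝ) :
    MemLp (fun x : ι → ℝ ↦ c ⬝ᵥ x) 2 (Measure.pi fun _ ↦ μ) := by
  have := memLp_finsetSum' Finset.univ fun i _ ↦
    (hμ.const_mul (c i)).comp_measurePreserving (measurePreserving_eval (fun _ : ι ↦ μ) i)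
  convert this using 1
  ext x
  simp [dotProduct]

lemma variance_dotProduct_pi (hμ : MemLp id 2 μ) (c : ι → ℝ) :
    Var[fun x : ι → ℝ ↦ c ⬝ᵥ x; Measure.pi fun _ ↦ μ] = (c ⬝ᵥ c) * Var[id; μ] := by
  have := variance_sum_pi (μ := fun _ : ι ↦ μ) (X := fun i x ↦ c i * x)
    fun i ↦ hμ.const_mul (c i)
  convert this using 2
  · ext x
    simp [dotProduct]
  · simp only [dotProduct, Finset.sum_mul]
    refine Finset.sum_congr rfl fun i _ ↦ ?_
    rw [← sq, ← variance_const_mul]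
    rfl

variable {ν : Measure ℝ} [IsProbabilityMeasure ν]

lemma variance_dotProduct_add_dotProduct_prod (hμ : MemLp id 2 μ) (hν : MemLp id 2 ν)
    (c d : ι → ℝ) :
    Var[fun p : (ι → ℝ) × (ι → ℝ) ↦ c ⬝ᵥ p.1 + d ⬝ᵥ p.2;
        (Measure.pi fun _ ↦ μ).prod (Measure.pi fun _ ↦ ν)]
      = (c ⬝ᵥ c) * Var[id; μ] + (d ⬝ᵥ d) * Var[id; ν] := by
  rw [variance_add_prod (memLp_dotProduct_pi hμ c) (memLp_dotProduct_pi hν d),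
    variance_dotProduct_pi hμ, variance_dotProduct_pi hν]

end Pi

lemma dotProduct_vecMul_self {m n R : Type*} [Fintype m] [DecidableEq m] [Fintype n]
    [CommSemiring R] {A : Matrix m n R} (hA : A * Aᵀ = 1) (x : m → R) :
    (x ᵥ* A) ⬝ᵥ (x ᵥ* A) = x ⬝ᵥ x := by
  rw [← dotProduct_mulVec, ← vecMul_transpose, vecMul_vecMul, hA, vecMul_one]

lemma dotProduct_mulVec_add_sub_dotProduct {m n R : Type*} [Fintype m] [Fintype n] [CommRing R]
    (A : Matrix m n R) (u : m → R) (w z : n → R) (ξ : m → R) :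
    u ⬝ᵥ (A *ᵥ z + ξ) - w ⬝ᵥ z = (u ᵥ* A - w) ⬝ᵥ z + u ⬝ᵥ ξ := by
  rw [dotProduct_add, dotProduct_mulVec, sub_dotProduct]
  ring

lemma mul_mul_sq_sub_div_add_le {a b : ℝ} (ha : 0 ≤ a) (hb : 0 ≤ b) (x y : ℝ) :
    a * b * (x - y) ^ 2 / (a + b) ≤ a * x ^ 2 + b * y ^ 2 := by
  rcases (add_nonneg ha hb).eq_or_lt with hab | hab
  · rw [← hab, div_zero]; positivity
  · rw [div_le_iff₀ hab]
    nlinarith [sq_nonneg (a * x + b * y)]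

/-- Lower bound for linear predictors in the sparse latent model `X = AZ + ξ`,
`Y = ⟨w, Z⟩`, with `A` orthogonal, `w ∈ {±1}ⁿ`, `Z` with i.i.d. coordinates equal to
`N(0, γ²)` with probability `k/n` and `0` otherwise, and `ξ ~ N(0, σ²I)`: for every
linear predictor `wt`, `E[(⟨wt, X⟩ − Y)²] ≥ γ²k σ² / (γ²(k/n) + σ²)`. -/
theorem linear_predictor_lower_bound (n k : ℕ) (hn : 0 < n) (hkn : k ≤ n)
    (A : Matrix (Fin n) (Fin n) ℝ) (hA : Aᵀ * A = 1)
    (w : Fin n → ℝ) (hw : ∀ i, w i = 1 ∨ w i = -1)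
    (γ σ : ℝ≥0) (wt : Fin n → ℝ) :
    (γ : ℝ) ^ 2 * k * (σ : ℝ) ^ 2 / ((γ : ℝ) ^ 2 * ((k : ℝ) / n) + (σ : ℝ) ^ 2) ≤
    ∫ p : (Fin n → ℝ) × (Fin n → ℝ),
        ((∑ i, wt i * (A.mulVec p.1 + p.2) i) - ∑ i, w i * p.1 i) ^ 2
      ∂(Measure.prod
          (Measure.pi fun _ : Fin n =>
            (1 - (k : ℝ≥0) / (n : ℝ≥0)) • Measure.dirac (0 : ℝ) +
              ((k : ℝ≥0) / (n : ℝ≥0)) • gaussianReal 0 (γ ^ 2))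
          (Measure.pi fun _ : Fin n => gaussianReal 0 (σ ^ 2))) := by
  have hp : (k : ℝ≥0) / n ≤ 1 := div_le_one_of_le₀ (by exact_mod_cast hkn) (by positivity)
  have := isProbabilityMeasure_sparseGaussianReal (γ ^ 2) hp
  set v := wt ᵥ* A
  have hvar := variance_dotProduct_add_dotProduct_prod (ι := Fin n)
    (memLp_id_sparseGaussianReal (p := k / n) (γ ^ 2))
    (memLp_id_gaussianReal (μ := 0) (v := σ ^ 2) 2) (v - w) wt
  rw [variance_id_sparseGaussianReal, variance_id_gaussianReal,
    ← dotProduct_vecMul_self (mul_eq_one_comm.1 hA) wt] at hvar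
  push_cast at hvar
  have hw2 : ∀ j, ((v - w) j - v j) ^ 2 = 1 := fun j ↦ by rcases hw j with h | h <;> simp [h]
  have hresid : ∀ z ξ : Fin n → ℝ,
      (∑ i, wt i * (A *ᵥ z + ξ) i) - ∑ i, w i * z i = (v - w) ⬝ᵥ z + wt ⬝ᵥ ξ :=
    dotProduct_mulVec_add_sub_dotProduct A wt w
  set a : ℝ := k / n * γ ^ 2
  set b : ℝ := σ ^ 2
  calc _ = ∑ j, a * b * ((v - w) j - v j) ^ 2 / (a + b) := by
        simp only [hw2, Finset.sum_const, Finset.card_univ, Fintype.card_fin, nsmul_eq_mul, a, b]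
        field_simp
    _ ≤ ∑ j, (a * (v - w) j ^ 2 + b * v j ^ 2) := Finset.sum_le_sum fun j _ ↦
        mul_mul_sq_sub_div_add_le (by positivity) (by positivity) _ _
    _ = Var[fun p : (Fin n → ℝ) × (Fin n → ℝ) ↦ (v - w) ⬝ᵥ p.1 + wt ⬝ᵥ p.2;
          (Measure.pi fun _ ↦ sparseGaussianReal (k / n) (γ ^ 2)).prod
            (Measure.pi fun _ ↦ gaussianReal 0 (σ ^ 2))] := by
        rw [hvar, Finset.sum_add_distrib, ← Finset.mul_sum, ← Finset.mul_sum]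
        simp only [dotProduct, sq]
        ring
    _ ≤ _ := by
        refine (variance_le_expectation_sq (by unfold dotProduct; fun_prop)).trans_eq ?_
        simp only [Pi.pow_apply, hresid]
        rfl -- `sparseGaussianReal` unfolds to the mixture in the statement
end

section
/- (Performance of soft-thresholding for sparse recovery) Let A be an n×m matrix with ‖AᵀA − I‖_∞ ≤ μ and columns of ℓ₂-norm² at most 1+μ. Let z ∈ ℝ^m with ‖z‖₁ ≤ M and |supp(z)| ≤ k, and let x = Az + ξ with ξ ~ N(0, σ²I_n). Then there is τ = Θ(σ√((1+μ)log m) + μM) such that with high probability the estimate ẑ = ρ_τ^{⊗m}(Aᵀx) (coordinatewise soft thresholding) satisfies ‖ẑ − z‖_∞ ≤ 2τ and supp(ẑ) ⊆ supp(z). -/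
/-!
Write `Aᵀx - z = (AᵀA - 1) z + Aᵀξ`. By incoherence every coordinate of the first term is at
most `μ ‖z‖₁ ≤ μ M` in absolute value. Each coordinate of `Aᵀξ` is a Gaussian linear form of
variance at most `σ² (1 + μ)`, so it exceeds `t = 3 σ √((1 + μ) log m)` with probability at most
`2 m⁻³`, and a union bound over the `m` coordinates leaves a failure probability `2 / m² ≤ 1 / m`.
Outside that event `Aᵀx` is within `τ = 3 (σ √((1 + μ) log m) + μ M)` of `z` in every coordinate, and
soft thresholding at level `τ` moves a point by at most `τ` and sends every point of modulus at
most `τ` to `0`.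
-/

open Matrix MeasureTheory ProbabilityTheory NNReal Real

noncomputable def softThreshold (τ y : ℝ) : ℝ := Real.sign y * max 0 (|y| - τ)

lemma softThreshold_eq_zero_of_abs_le {τ y : ℝ} (h : |y| ≤ τ) : softThreshold τ y = 0 := by
  simp [softThreshold, h]

lemma abs_softThreshold_sub_self_le {τ : ℝ} (hτ : 0 ≤ τ) (y : ℝ) : |softThreshold τ y - y| ≤ τ := by
  rcases lt_trichotomy y 0 with hy | rfl | hy
  · rw [softThreshold, sign_of_neg hy, abs_of_neg hy, abs_le]
    constructor <;> cases max_cases 0 (-y - τ) <;> linarith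
  · simpa [softThreshold] using hτ
  · rw [softThreshold, sign_of_pos hy, abs_of_pos hy, abs_le]
    constructor <;> cases max_cases 0 (y - τ) <;> linarith

lemma abs_softThreshold_sub_le {τ y z : ℝ} (hτ : 0 ≤ τ) (h : |y - z| ≤ τ) :
    |softThreshold τ y - z| ≤ 2 * τ :=
  calc |softThreshold τ y - z| ≤ |softThreshold τ y - y| + |y - z| := abs_sub_le _ _ _
    _ ≤ 2 * τ := by linarith [abs_softThreshold_sub_self_le hτ y]

lemma abs_mulVec_apply_le {ι κ : Type*} [Fintype κ] {B : Matrix ι κ ℝ} {μ : ℝ}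
    (hB : ∀ i j, |B i j| ≤ μ) (z : κ → ℝ) (i : ι) : |(B *ᵥ z) i| ≤ μ * ∑ j, |z j| :=
  calc |(B *ᵥ z) i| ≤ ∑ j, |B i j * z j| := Finset.abs_sum_le_sum_abs _ _
    _ ≤ ∑ j, μ * |z j| := Finset.sum_le_sum fun j _ => by
        rw [abs_mul]; exact mul_le_mul_of_nonneg_right (hB i j) (abs_nonneg _)
    _ = μ * ∑ j, |z j| := (Finset.mul_sum _ _ _).symm

lemma abs_transpose_mulVec_mulVec_add_sub_le {n m : Type*} [Fintype n] [Fintype m]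
    [DecidableEq m] {A : Matrix n m ℝ} {μ : ℝ} (hA : ∀ i j, |(Aᵀ * A - 1 : Matrix m m ℝ) i j| ≤ μ)
    (z : m → ℝ) (ξ : n → ℝ) (i : m) :
    |(Aᵀ *ᵥ (A *ᵥ z + ξ)) i - z i| ≤ μ * ∑ j, |z j| + |(Aᵀ *ᵥ ξ) i| := by
  have hsplit : Aᵀ *ᵥ (A *ᵥ z + ξ) - z = (Aᵀ * A - 1) *ᵥ z + Aᵀ *ᵥ ξ := by
    rw [mulVec_add, mulVec_mulVec, sub_mulVec, one_mulVec]; abel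
  rw [← Pi.sub_apply, hsplit, Pi.add_apply]
  exact (abs_add_le _ _).trans (add_le_add_left (abs_mulVec_apply_le hA z i) _)

lemma hasSubgaussianMGF_id_gaussianReal (v : ℝ≥0) :
    HasSubgaussianMGF id v (gaussianReal 0 v) where
  integrable_exp_mul t := integrable_exp_mul_gaussianReal t
  mgf_le t := by simp [mgf_id_gaussianReal]

lemma hasSubgaussianMGF_dotProduct_gaussianReal_pi {ι : Type*} [Fintype ι] (v : ℝ≥0)
    (c : ι → ℝ) :
    HasSubgaussianMGF (fun ξ => c ⬝ᵥ ξ) (∑ j, ⟨c j ^ 2, sq_nonneg _⟩ * v)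
      (Measure.pi fun _ : ι => gaussianReal 0 v) := by
  have hindep : iIndepFun (fun j (ξ : ι → ℝ) => c j * ξ j) (Measure.pi fun _ => gaussianReal 0 v) :=
    iIndepFun_pi (X := fun j x => c j * x) fun j => by fun_prop
  have hcoord (j : ι) : HasSubgaussianMGF (fun ξ : ι → ℝ => ξ j) v
      (Measure.pi fun _ => gaussianReal 0 v) := by
    rw [← HasSubgaussianMGF.id_map_iff (measurable_pi_apply j).aemeasurable,
      (measurePreserving_eval _ j).map_eq]
    exact hasSubgaussianMGF_id_gaussianReal v
  simpa [dotProduct] using HasSubgaussianMGF.sum_of_iIndepFun hindep (s := Finset.univ)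
    fun j _ => (hcoord j).const_mul (c j)

lemma ProbabilityTheory.HasSubgaussianMGF.measureReal_lt_abs_le {Ω : Type*} {mΩ : MeasurableSpace Ω}
    {μ : Measure Ω} [IsFiniteMeasure μ] {X : Ω → ℝ} {c : ℝ≥0} (h : HasSubgaussianMGF X c μ)
    {ε L : ℝ} (hε : 0 ≤ ε) (hL : 2 * c * L ≤ ε ^ 2) :
    μ.real {ω | ε < |X ω|} ≤ 2 * exp (-L) := by
  rcases eq_zero_or_pos c with rfl | hc
  · have hnull : μ {ω | ε < |X ω|} = 0 := by
      rw [measure_eq_zero_iff_ae_notMem]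
      filter_upwards [h.ae_eq_zero_of_hasSubgaussianMGF_zero] with ω hω
      simpa [hω] using hε
    simp [measureReal_def, hnull]; positivity
  have hexp : exp (-ε ^ 2 / (2 * c)) ≤ exp (-L) := by
    gcongr
    rw [neg_div, neg_le_neg_iff, le_div_iff₀ (by positivity)]
    linarith
  calc μ.real {ω | ε < |X ω|} ≤ μ.real ({ω | ε ≤ X ω} ∪ {ω | ε ≤ (-X) ω}) := by
        refine measureReal_mono fun ω (hω : ε < |X ω|) => ?_
        rcases lt_abs.mp hω with h' | h'
        · exact Or.inl h'.le
        · exact Or.inr h'.le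
    _ ≤ μ.real {ω | ε ≤ X ω} + μ.real {ω | ε ≤ (-X) ω} := measureReal_union_le _ _
    _ ≤ 2 * exp (-L) := by linarith [h.measure_ge_le hε, h.neg.measure_ge_le hε]

lemma one_sub_inv_natCast_le (m : ℕ) {p : ℝ} (hp : 0 ≤ p)
    (h : 1 - m * (2 * exp (-(3 * log m))) ≤ p) : 1 - 1 / (m : ℝ) ≤ p := by
  rcases Nat.lt_or_ge m 2 with hm | hm
  · interval_cases m
    · simpa using h
    · simpa using hp
  have hm' : (2 : ℝ) ≤ m := by exact_mod_cast hm
  have hexp : exp (-(3 * log m)) = ((m : ℝ) ^ 3)⁻¹ := by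
    rw [Real.exp_neg, show (3 : ℝ) * log m = log (m ^ 3) by rw [log_pow]; norm_num,
      exp_log (by positivity)]
  have hsmall : (m : ℝ) * (2 * ((m : ℝ) ^ 3)⁻¹) ≤ 1 / m := by
    rw [show (m : ℝ) ^ 3 = m * m * m by ring]
    field_simp
    linarith
  rw [hexp] at h
  linarith

lemma one_sub_inv_le_measure_forall_abs_transpose_mulVec_le {n m : ℕ}
    (A : Matrix (Fin n) (Fin m) ℝ) (σ : ℝ≥0) {s : ℝ} (hA : ∀ j, ∑ i, A i j ^ 2 ≤ s) :
    ENNReal.ofReal (1 - 1 / (m : ℝ)) ≤ (Measure.pi fun _ : Fin n => gaussianReal 0 (σ ^ 2))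
      {ξ | ∀ i, |(Aᵀ *ᵥ ξ) i| ≤ 3 * σ * √(s * log m)} := by
  set ν := Measure.pi fun _ : Fin n => gaussianReal 0 (σ ^ 2)
  set t := 3 * σ * √(s * log m)
  have htail (i : Fin m) : ν.real {ξ | t < |(Aᵀ *ᵥ ξ) i|} ≤ 2 * exp (-(3 * log m)) := by
    have hs : 0 ≤ s := (Finset.sum_nonneg fun j _ => sq_nonneg (A j i)).trans (hA i)
    have hX : HasSubgaussianMGF (fun ξ => (Aᵀ *ᵥ ξ) i) (∑ j, ⟨A j i ^ 2, sq_nonneg _⟩ * σ ^ 2) ν :=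
      hasSubgaussianMGF_dotProduct_gaussianReal_pi (σ ^ 2) fun j => A j i
    refine hX.measureReal_lt_abs_le (by positivity) ?_
    have hlog : 0 ≤ log m := log_natCast_nonneg m
    rw [mul_pow, mul_pow, sq_sqrt (by positivity)]
    have hc : ((∑ j, ⟨A j i ^ 2, sq_nonneg _⟩ * σ ^ 2 : ℝ≥0) : ℝ) = (∑ j, A j i ^ 2) * σ ^ 2 := by
      push_cast [Finset.sum_mul]; rfl
    rw [hc]
    nlinarith [hA i, mul_nonneg hlog (sq_nonneg (σ : ℝ))]
  have hbad : ν.real {ξ | ∀ i, |(Aᵀ *ᵥ ξ) i| ≤ t}ᶜ ≤ m * (2 * exp (-(3 * log m))) :=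
    calc ν.real {ξ | ∀ i, |(Aᵀ *ᵥ ξ) i| ≤ t}ᶜ = ν.real (⋃ i, {ξ | t < |(Aᵀ *ᵥ ξ) i|}) := by
          congr 1; ext; simp
      _ ≤ ∑ i, ν.real {ξ | t < |(Aᵀ *ᵥ ξ) i|} := measureReal_iUnion_fintype_le _
      _ ≤ ∑ _i : Fin m, 2 * exp (-(3 * log m)) := Finset.sum_le_sum fun i _ => htail i
      _ = m * (2 * exp (-(3 * log m))) := by simp
  have hcover := measureReal_union_le (μ := ν) {ξ | ∀ i, |(Aᵀ *ᵥ ξ) i| ≤ t}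
    {ξ | ∀ i, |(Aᵀ *ᵥ ξ) i| ≤ t}ᶜ
  rw [Set.union_compl_self, probReal_univ] at hcover
  rw [← ofReal_measureReal]
  exact ENNReal.ofReal_le_ofReal
    (one_sub_inv_natCast_le m measureReal_nonneg (by linarith))

/-- Performance of coordinatewise soft thresholding for sparse recovery: there is a
universal constant `C > 0` such that for any `μ`-incoherent `A` with column norms²
at most `1+μ`, any `k`-sparse `z` with `‖z‖₁ ≤ M`, and `x = Az + ξ` with
`ξ ~ N(0, σ²Iₙ)`, taking `τ = C(σ√((1+μ) log m) + μM)`, with probability at least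
`1 − 1/m` the soft-threshold estimate `ẑ = ρ_τ^{⊗m}(Aᵀx)` satisfies
`‖ẑ − z‖_∞ ≤ 2τ` and `supp(ẑ) ⊆ supp(z)`. -/
theorem soft_threshold_recovery :
    ∃ C : ℝ, 0 < C ∧
      ∀ (n m k : ℕ) (A : Matrix (Fin n) (Fin m) ℝ) (μ M : ℝ) (σ : ℝ≥0),
        0 ≤ μ →
        (∀ i j, |(Aᵀ * A - 1 : Matrix (Fin m) (Fin m) ℝ) i j| ≤ μ) →
        (∀ j, ∑ i, (A i j) ^ 2 ≤ 1 + μ) →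
        ∀ z : Fin m → ℝ, (∑ j, |z j|) ≤ M →
          (Finset.univ.filter fun j => z j ≠ 0).card ≤ k →
          ENNReal.ofReal (1 - 1 / (m : ℝ)) ≤
            (Measure.pi fun _ : Fin n => gaussianReal 0 (σ ^ 2))
              {ξ : Fin n → ℝ | ∀ i : Fin m,
                |Real.sign (Aᵀ.mulVec (A.mulVec z + ξ) i) *
                    max 0 (|Aᵀ.mulVec (A.mulVec z + ξ) i| -
                      C * ((σ : ℝ) * Real.sqrt ((1 + μ) * Real.log m) + μ * M)) - z i| ≤
                  2 * (C * ((σ : ℝ) * Real.sqrt ((1 + μ) * Real.log m) + μ * M)) ∧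
                (z i = 0 →
                  Real.sign (Aᵀ.mulVec (A.mulVec z + ξ) i) *
                    max 0 (|Aᵀ.mulVec (A.mulVec z + ξ) i| -
                      C * ((σ : ℝ) * Real.sqrt ((1 + μ) * Real.log m) + μ * M)) = 0)} := by
  refine ⟨3, by norm_num, fun n m k A μ M σ hμ hinc hcol z hM _ => ?_⟩
  have hM0 : 0 ≤ M := (Finset.sum_nonneg fun j _ => abs_nonneg (z j)).trans hM
  have hτ : 0 ≤ 3 * ((σ : ℝ) * √((1 + μ) * log m) + μ * M) := by positivity
  refine (one_sub_inv_le_measure_forall_abs_transpose_mulVec_le A σ hcol).trans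
    (measure_mono fun ξ hξ i => ?_)
  have hdev : |(Aᵀ *ᵥ (A *ᵥ z + ξ)) i - z i| ≤ 3 * ((σ : ℝ) * √((1 + μ) * log m) + μ * M) :=
    calc _ ≤ μ * ∑ j, |z j| + |(Aᵀ *ᵥ ξ) i| := abs_transpose_mulVec_mulVec_add_sub_le hinc z ξ i
      _ ≤ μ * M + 3 * σ * √((1 + μ) * log m) := by gcongr; exact hξ i
      _ ≤ _ := by linarith [mul_nonneg hμ hM0]
  exact ⟨abs_softThreshold_sub_le hτ hdev,
    fun hz => softThreshold_eq_zero_of_abs_le (by simpa [hz] using hdev)⟩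
end
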